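/- arXiv:1401.5551 — 2 statements merged into one kernel-verified Lean document; each statement's English description precedes it below -/
import Mathlib

section
/- Let G be a topologically sorted DAG on n nodes. Then every matrix in loc(G) all of whose diagonal entries equal 1 is the limit, in the standard topology on real n × n matrices, of a sequence of positive definite matrices in loc(G) all of whose diagonal entries equal 1. -/
open Matrix

noncomputable section

/-- The parent set of a node `j` in the DAG with edge relation `E`. -/
def parents {n : ℕ} (E : Fin n → Fin n → Prop) [DecidableRel E] (j : Fin n) : Finset (Fin n) :=
  Finset.univ.filter (fun i => E i j)

/-- The rank of the submatrix of `σ` with rows `A` and columns `B`. -/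
def subRank {n : ℕ} (σ : Matrix (Fin n) (Fin n) ℝ) (A B : Finset (Fin n)) : ℕ :=
  (σ.submatrix (fun a : A => (a : Fin n)) (fun b : B => (b : Fin n))).rank

/-- `loc(G)`: positive semidefinite matrices satisfying the rank conditions of the local
Markov relations of the DAG `G`. -/
def locSet {n : ℕ} (E : Fin n → Fin n → Prop) [DecidableRel E] :
    Set (Matrix (Fin n) (Fin n) ℝ) :=
  {σ | σ.PosSemidef ∧ ∀ i j : Fin n, i < j → ¬ E i j →
    subRank σ (insert i (parents E j)) (insert j (parents E j)) =
      subRank σ (parents E j) (parents E j)}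

/-! If `σ ∈ loc(G)`, there are regression weights `Λ`, supported on the edges of `G`, with
`σ i j = ∑ k ∈ pa(j), σ i k * Λ k j` for all `i < j`, i.e. `σ * (1 - Λ)` is lower triangular
(for `i ∈ pa(j)` by projecting a Gram vector of `j` onto those of `pa(j)`, for the other `i` by the
rank condition); conversely, a positive definite matrix with such weights lies in `loc(G)`.
As `T = 1 - Λ` is unipotent upper triangular, `C = T⁻ᵀ T⁻¹` is positive definite with `C T = T⁻ᵀ`
lower triangular, so `σ + ε C` is positive definite with the same weights for every `ε > 0`.
Rescaling it to its correlation matrix keeps it in `loc(G)` and tends to `σ` as `ε → 0`. -/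

open Submodule Module Finset Filter Topology

theorem exists_inner_eq_sum_inner_mul {ι E : Type*} [NormedAddCommGroup E]
    [InnerProductSpace ℝ E] (v : ι → E) (K : Finset ι) (x : E) :
    ∃ c : ι → ℝ, ∀ a ∈ K, inner ℝ (v a) x = ∑ k ∈ K, inner ℝ (v a) (v k) * c k := by
  set U := span ℝ (v '' K)
  have : FiniteDimensional ℝ U := .span_of_finite ℝ (K.finite_toSet.image v)
  obtain ⟨c, hc⟩ := (mem_span_image_finset_iff_exists_fun' ℝ).mp (U.starProjection_apply_mem x)
  refine ⟨c, fun a ha => ?_⟩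
  have horth : inner ℝ (v a) (x - U.starProjection x) = 0 :=
    (mem_orthogonal U _).mp (U.sub_starProjection_mem_orthogonal x) _ (subset_span ⟨a, ha, rfl⟩)
  rw [inner_sub_right, ← hc, inner_sum, sub_eq_zero] at horth
  simpa [real_inner_smul_right, mul_comm] using horth

namespace Matrix

variable {m m' n ι R : Type*}

theorem row_mem_span_submatrix_row_of_rank_le [Field R] [Fintype m] [Fintype m'] [Fintype n]
    (A : Matrix m n R) (r : m' → m) (h : A.rank ≤ (A.submatrix r id).rank) (i : m) :
    A i ∈ span R (Set.range fun k => A (r k)) := by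
  have hle : span R (Set.range fun k => A (r k)) ≤ span R (Set.range A.row) :=
    span_mono (Set.range_comp_subset_range r A)
  have hrank : finrank R (span R (Set.range A.row)) ≤
      finrank R (span R (Set.range (A.submatrix r id).row)) := by
    rwa [← rank_eq_finrank_span_row, ← rank_eq_finrank_span_row]
  rw [eq_of_le_of_finrank_le hle hrank]
  exact subset_span ⟨i, rfl⟩

theorem rank_le_card_of_col_mem_span [Field R] [Fintype m] [Fintype n] [Fintype ι]
    (A : Matrix m n R) (v : ι → m → R) (h : ∀ b, (fun a => A a b) ∈ span R (Set.range v)) :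
    A.rank ≤ Fintype.card ι := by
  rw [rank_eq_finrank_span_cols]
  calc _ ≤ finrank R (span R (Set.range v)) :=
        Submodule.finrank_mono (span_le.mpr (by rintro _ ⟨b, rfl⟩; exact h b))
    _ ≤ Fintype.card ι := finrank_range_le_card v

open scoped MatrixOrder in
theorem PosSemidef.exists_sum_mul_eq [Fintype ι] {σ : Matrix ι ι ℝ} (hσ : σ.PosSemidef)
    (K : Finset ι) (j : ι) : ∃ c : ι → ℝ, ∀ a ∈ K, σ a j = ∑ k ∈ K, σ a k * c k := by
  classical
  obtain ⟨B, rfl⟩ := CStarAlgebra.nonneg_iff_eq_star_mul_self.mp hσ.nonneg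
  simpa [mul_apply, PiLp.inner_apply, mul_comm] using exists_inner_eq_sum_inner_mul
    (fun a => WithLp.toLp 2 fun r => B r a) K (WithLp.toLp 2 fun r => B r j)

section Triangular

variable [DecidableEq ι] [LinearOrder ι]

theorem isUpperTriangular_one_sub {Λ : Matrix ι ι ℝ} (hΛ : ∀ i j, j ≤ i → Λ i j = 0) :
    (1 - Λ).IsUpperTriangular :=
  fun i j hji => by simp [one_apply_ne (show i ≠ j from hji.ne'), hΛ i j hji.le]

variable [Fintype ι]

theorem isLowerTriangular_mul_one_sub_iff {σ Λ : Matrix ι ι ℝ} :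
    (σ * (1 - Λ)).IsLowerTriangular ↔ ∀ i j, i < j → σ i j = ∑ k, σ i k * Λ k j := by
  rw [mul_sub, mul_one]
  simp only [IsLowerTriangular, BlockTriangular, OrderDual.toDual_lt_toDual, sub_apply, mul_apply,
    sub_eq_zero]

theorem det_one_sub {Λ : Matrix ι ι ℝ} (hΛ : ∀ i j, j ≤ i → Λ i j = 0) : (1 - Λ).det = 1 := by
  rw [det_of_isUpperTriangular (isUpperTriangular_one_sub hΛ)]
  simp [hΛ]

theorem IsUpperTriangular.exists_posDef_mul_isLowerTriangular {T : Matrix ι ι ℝ}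
    (hT : T.IsUpperTriangular) (hdet : IsUnit T.det) :
    ∃ C : Matrix ι ι ℝ, C.PosDef ∧ (C * T).IsLowerTriangular := by
  have := T.invertibleOfIsUnitDet hdet
  have hinv : IsUnit T⁻¹ := isUnit_nonsing_inv_iff.mpr ((isUnit_iff_isUnit_det _).mpr hdet)
  refine ⟨star T⁻¹ * 1 * T⁻¹, (IsUnit.posDef_star_left_conjugate_iff hinv).mpr .one, ?_⟩
  rw [mul_one, mul_assoc, inv_mul_of_invertible, mul_one]
  exact (blockTriangular_inv_of_blockTriangular hT).transpose

theorem isLowerTriangular_diagonal_conj {X Λ : Matrix ι ι ℝ} {d : ι → ℝ} (hd : ∀ a, d a ≠ 0)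
    (h : (X * (1 - Λ)).IsLowerTriangular) :
    (diagonal d * X * diagonal d * (1 - diagonal d⁻¹ * Λ * diagonal d)).IsLowerTriangular := by
  have hdd : diagonal d * diagonal d⁻¹ = 1 := by
    rw [diagonal_mul_diagonal, ← diagonal_one]
    exact congrArg diagonal (funext fun a => mul_inv_cancel₀ (hd a))
  have hconj : diagonal d * X * diagonal d * (1 - diagonal d⁻¹ * Λ * diagonal d) =
      diagonal d * (X * (1 - Λ)) * diagonal d :=
    calc _ = diagonal d * X * diagonal d -
          diagonal d * X * (diagonal d * diagonal d⁻¹) * Λ * diagonal d := by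
          simp only [mul_sub, mul_one, mul_assoc]
      _ = _ := by rw [hdd]; simp only [mul_sub, sub_mul, mul_one, mul_assoc]
  rw [hconj]
  exact ((blockTriangular_diagonal d).mul h).mul (blockTriangular_diagonal d)

end Triangular

section Correlation

variable [Fintype ι] [DecidableEq ι]

def corrMatrix (X : Matrix ι ι ℝ) : Matrix ι ι ℝ :=
  diagonal (fun a => (√(X a a))⁻¹) * X * diagonal (fun a => (√(X a a))⁻¹)

theorem corrMatrix_apply (X : Matrix ι ι ℝ) (a b : ι) :
    corrMatrix X a b = (√(X a a))⁻¹ * X a b * (√(X b b))⁻¹ := by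
  simp [corrMatrix, mul_diagonal, diagonal_mul]

theorem corrMatrix_apply_self {X : Matrix ι ι ℝ} {a : ι} (h : 0 < X a a) :
    corrMatrix X a a = 1 := by
  rw [corrMatrix_apply]
  field_simp
  exact (Real.sq_sqrt h.le).symm

theorem corrMatrix_eq_self {X : Matrix ι ι ℝ} (h : ∀ a, X a a = 1) : corrMatrix X = X := by
  ext a b
  simp [corrMatrix_apply, h]

theorem PosDef.corrMatrix {X : Matrix ι ι ℝ} (hX : X.PosDef) : X.corrMatrix.PosDef := by
  have hU : IsUnit (diagonal fun a => (√(X a a))⁻¹) := by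
    simpa [isUnit_diagonal, Pi.isUnit_iff] using fun a => (Real.sqrt_pos.mpr hX.diag_pos).ne'
  simpa [Matrix.corrMatrix, star_eq_conjTranspose] using
    (hU.posDef_star_left_conjugate_iff).mpr hX

theorem continuousAt_corrMatrix {X : Matrix ι ι ℝ} (h : ∀ a, 0 < X a a) :
    ContinuousAt corrMatrix X := by
  have hentry : ∀ a b, Continuous fun Y : Matrix ι ι ℝ => Y a b := fun a b =>
    (continuous_apply b).comp (continuous_apply a)
  have hscale : ∀ a, ContinuousAt (fun Y : Matrix ι ι ℝ => (√(Y a a))⁻¹) X := fun a =>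
    (Real.continuous_sqrt.comp (hentry a a)).continuousAt.inv₀ (Real.sqrt_pos.mpr (h a)).ne'
  refine continuousAt_pi.mpr fun a => continuousAt_pi.mpr fun b => ?_
  simp only [corrMatrix_apply]
  exact ((hscale a).mul (hentry a b).continuousAt).mul (hscale b)

end Correlation

end Matrix

section LocalMarkov

variable {n : ℕ} {E : Fin n → Fin n → Prop} [DecidableRel E]

theorem mem_parents {k j : Fin n} : k ∈ parents E j ↔ E k j := by
  simp [parents]

theorem sum_mul_eq_sum_parents {Λ : Matrix (Fin n) (Fin n) ℝ} (hΛ : ∀ k j, ¬E k j → Λ k j = 0)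
    (f : Fin n → ℝ) (j : Fin n) : ∑ k, f k * Λ k j = ∑ k ∈ parents E j, f k * Λ k j :=
  (sum_filter_of_ne fun k _ hk => by_contra fun h => hk (by rw [hΛ k j h, mul_zero])).symm

theorem mem_locSet_of_posDef (hE : ∀ i j, E i j → i < j) {σ Λ : Matrix (Fin n) (Fin n) ℝ}
    (hσ : σ.PosDef) (hΛ : ∀ k j, ¬E k j → Λ k j = 0) (hσΛ : (σ * (1 - Λ)).IsLowerTriangular) :
    σ ∈ locSet E := by
  refine ⟨hσ.posSemidef, fun i j hij _ => ?_⟩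
  set K := parents E j
  have hK : subRank σ K K = #K := by
    rw [subRank, rank_of_isUnit _ (hσ.submatrix Subtype.val_injective).isUnit, Fintype.card_coe]
  apply le_antisymm
  · rw [hK, ← Fintype.card_coe K]
    refine rank_le_card_of_col_mem_span _ (fun (k : K) (a : ↥(insert i K)) => σ a k) ?_
    rintro ⟨b, hb⟩
    rcases mem_insert.mp hb with rfl | hbK
    · have hcol : (fun a : ↥(insert i K) => σ a b) =
          ∑ k : K, Λ k b • fun a : ↥(insert i K) => σ a k := by
        ext ⟨a, ha⟩
        have hab : a < b := (mem_insert.mp ha).elim (· ▸ hij) fun h => hE _ _ (mem_parents.mp h)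
        simp only [Finset.sum_apply, Pi.smul_apply, smul_eq_mul]
        rw [sum_coe_sort K (fun k => Λ k b * σ a k),
          isLowerTriangular_mul_one_sub_iff.mp hσΛ a b hab, sum_mul_eq_sum_parents hΛ]
        exact sum_congr rfl fun _ _ => mul_comm _ _
      change (fun a : ↥(insert i K) => σ a b) ∈ _
      rw [hcol]
      exact sum_mem fun k _ => smul_mem _ _ (subset_span ⟨k, rfl⟩)
    · exact subset_span ⟨⟨b, hbK⟩, rfl⟩
  · exact rank_submatrix_le (σ.submatrix (fun a : ↥(insert i K) => (a : Fin n))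
      (fun b : ↥(insert j K) => (b : Fin n))) (fun k : K => ⟨k, mem_insert_of_mem k.2⟩)
      (fun k : K => ⟨k, mem_insert_of_mem k.2⟩)

theorem sum_mul_eq_of_subRank_eq {σ : Matrix (Fin n) (Fin n) ℝ} {K : Finset (Fin n)}
    {i j : Fin n} {c : Fin n → ℝ} (hc : ∀ a ∈ K, σ a j = ∑ k ∈ K, σ a k * c k)
    (hrank : subRank σ (insert i K) (insert j K) = subRank σ K K) :
    σ i j = ∑ k ∈ K, σ i k * c k := by
  set A := σ.submatrix (fun a : ↥(insert i K) => (a : Fin n))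
    (fun b : ↥(insert j K) => (b : Fin n))
  set r : K → ↥(insert i K) := fun k => ⟨k, mem_insert_of_mem k.2⟩
  have hrow : A ⟨i, mem_insert_self i K⟩ ∈ span ℝ (Set.range fun k => A (r k)) :=
    A.row_mem_span_submatrix_row_of_rank_le r (hrank.trans_le
      (rank_submatrix_le (A.submatrix r id) id fun k : K => ⟨k, mem_insert_of_mem k.2⟩)) _
  -- `φ` kills the rows indexed by `K` by the choice of `c`, hence also the row of `i`.
  let φ : (↥(insert j K) → ℝ) →ₗ[ℝ] ℝ := LinearMap.proj ⟨j, mem_insert_self j K⟩ -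
    ∑ k : K, c k • LinearMap.proj ⟨k, mem_insert_of_mem k.2⟩
  have hφ : span ℝ (Set.range fun k => A (r k)) ≤ LinearMap.ker φ := by
    refine span_le.mpr ?_
    rintro _ ⟨k, rfl⟩
    simp [φ, A, r, hc k k.2, ← sum_coe_sort K, mul_comm]
  have hφi := hφ hrow
  simp only [φ, A, LinearMap.mem_ker, LinearMap.sub_apply, LinearMap.sum_apply,
    LinearMap.proj_apply, submatrix_apply, sub_eq_zero] at hφi
  rw [hφi, ← sum_coe_sort K]
  exact sum_congr rfl fun _ _ => mul_comm _ _

theorem exists_weights_of_mem_locSet {σ : Matrix (Fin n) (Fin n) ℝ} (hσ : σ ∈ locSet E) :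
    ∃ Λ : Matrix (Fin n) (Fin n) ℝ,
      (∀ k j, ¬E k j → Λ k j = 0) ∧ (σ * (1 - Λ)).IsLowerTriangular := by
  choose c hc using fun j => hσ.1.exists_sum_mul_eq (parents E j) j
  set Λ : Matrix (Fin n) (Fin n) ℝ := of fun k j => if E k j then c j k else 0
  have hΛ : ∀ k j, ¬E k j → Λ k j = 0 := fun k j h => if_neg h
  refine ⟨Λ, hΛ, isLowerTriangular_mul_one_sub_iff.mpr fun i j hij => ?_⟩
  rw [sum_mul_eq_sum_parents hΛ, sum_congr rfl (g := fun k => σ i k * c j k) fun k hk => by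
    simp [Λ, mem_parents.mp hk]]
  by_cases hi : E i j
  · exact hc j i (mem_parents.mpr hi)
  · exact sum_mul_eq_of_subRank_eq (hc j) (hσ.2 i j hij hi)

theorem corrMatrix_mem_locSet (hE : ∀ i j, E i j → i < j) {X Λ : Matrix (Fin n) (Fin n) ℝ}
    (hX : X.PosDef) (hΛ : ∀ k j, ¬E k j → Λ k j = 0) (hXΛ : (X * (1 - Λ)).IsLowerTriangular) :
    corrMatrix X ∈ locSet E := by
  set d : Fin n → ℝ := fun a => (√(X a a))⁻¹
  have hd : ∀ a, d a ≠ 0 := fun a => inv_ne_zero (Real.sqrt_pos.mpr hX.diag_pos).ne'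
  exact mem_locSet_of_posDef hE hX.corrMatrix (Λ := diagonal d⁻¹ * Λ * diagonal d)
    (fun k j h => by simp [hΛ k j h]) (isLowerTriangular_diagonal_conj hd hXΛ)

end LocalMarkov

theorem locSet_unitDiag_subset_closure_posDef_general {n : ℕ}
    (E : Fin n → Fin n → Prop) [DecidableRel E] (hE : ∀ i j, E i j → i < j) :
    locSet E ∩ {σ | ∀ i, σ i i = 1} ⊆
      closure (locSet E ∩ {σ | σ.PosDef} ∩ {σ | ∀ i, σ i i = 1}) := by
  rintro σ ⟨hσ, hdiag : ∀ i, σ i i = 1⟩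
  obtain ⟨Λ, hΛE, hσΛ⟩ := exists_weights_of_mem_locSet hσ
  have hΛ : ∀ i j, j ≤ i → Λ i j = 0 := fun i j hji => hΛE i j fun h => (hE i j h).not_ge hji
  obtain ⟨C, hC, hCΛ⟩ := (isUpperTriangular_one_sub hΛ).exists_posDef_mul_isLowerTriangular
    (by simp [det_one_sub hΛ])
  set X : ℝ → Matrix (Fin n) (Fin n) ℝ := fun ε => σ + ε • C
  have hXpos : ∀ ε > 0, (X ε).PosDef := fun ε hε => PosDef.posSemidef_add hσ.1 (hC.smul hε)
  have hXΛ : ∀ ε, (X ε * (1 - Λ)).IsLowerTriangular := fun ε => by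
    rw [add_mul, smul_mul_assoc]
    exact hσΛ.add fun i j h => by simp [hCΛ h]
  have hlim : Tendsto (fun ε => corrMatrix (X ε)) (𝓝[>] 0) (𝓝 σ) := by
    have : ContinuousAt (fun ε => corrMatrix (X ε)) 0 :=
      (continuousAt_corrMatrix (by simp [X, hdiag])).comp (by fun_prop)
    simpa [X, corrMatrix_eq_self hdiag] using this.tendsto.mono_left nhdsWithin_le_nhds
  refine mem_closure_of_tendsto hlim (eventually_nhdsWithin_of_forall fun ε hε => ⟨⟨?_, ?_⟩, ?_⟩)
  · exact corrMatrix_mem_locSet hE (hXpos ε hε) hΛE (hXΛ ε)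
  · exact (hXpos ε hε).corrMatrix
  · exact fun a => corrMatrix_apply_self (hXpos ε hε).diag_pos

/-- Proposition 3(b): `loc(G) ∩ Σ̂⁺⁺` is dense in `loc(G) ∩ Σ̂`: every matrix in `loc(G)` with
unit diagonal is a limit of positive definite matrices in `loc(G)` with unit diagonal. -/
theorem locSet_unitDiag_subset_closure_posDef {n : ℕ} (hn : 1 ≤ n)
    (E : Fin n → Fin n → Prop) [DecidableRel E] (hE : ∀ i j, E i j → i < j) :
    locSet E ∩ {σ | ∀ i, σ i i = 1} ⊆
      closure (locSet E ∩ {σ | σ.PosDef} ∩ {σ | ∀ i, σ i i = 1}) :=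
  locSet_unitDiag_subset_closure_posDef_general E hE
end
end

section
/- Let G and G' be topologically sorted DAGs on the same node set Fin n. There exists a permutation s ∈ Equiv.Perm (Fin n) such that the ℂ-algebra automorphism of R induced by s maps the prime ideal p_G onto p_{G'}, if and only if p_G ∩ R^Π = p_{G'} ∩ R^Π, where R^Π is the subalgebra of polynomials invariant under all permutations of Fin n. -/
open MvPolynomial Matrix

noncomputable section

/-- The minor of `M` with rows `A` and columns `B`, each listed in increasing order. -/
def fminor {n : ℕ} {R : Type*} [CommRing R] (M : Matrix (Fin n) (Fin n) R)
    (A B : Finset (Fin n)) (h : B.card = A.card) : R :=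
  Matrix.det (Matrix.of fun k l : Fin A.card =>
    M (A.orderEmbOfFin rfl k) (B.orderEmbOfFin h l))

/-- The generic symmetric matrix, with `(i,j)` entry the variable indexed by the unordered
pair `s(i,j)`. -/
def genMat (n : ℕ) : Matrix (Fin n) (Fin n) (MvPolynomial (Sym2 (Fin n)) ℂ) :=
  fun i j => X (Sym2.mk i j)

/-- The ideal of imposed relations `I_G`, generated by the minors `det M_{{i}∪K,{j}∪K}` over all
pairs `i < j` with `¬ E i j`, where `K = pa(j)`. -/
def impIdeal {n : ℕ} (E : Fin n → Fin n → Prop) [DecidableRel E] :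
    Ideal (MvPolynomial (Sym2 (Fin n)) ℂ) :=
  Ideal.span { f | ∃ i j : Fin n, ∃ _ : i < j, ∃ _ : ¬ E i j,
    ∃ h : (insert j (parents E j)).card = (insert i (parents E j)).card,
      f = fminor (genMat n) (insert i (parents E j)) (insert j (parents E j)) h }

/-- The product `θ₀` of all principal minors of the generic symmetric matrix. -/
def theta0 (n : ℕ) : MvPolynomial (Sym2 (Fin n)) ℂ :=
  ∏ A : Finset (Fin n), fminor (genMat n) A A rfl

/-- The saturation `{f | ∃ m, g ^ m * f ∈ I}` of an ideal `I` at an element `g`. -/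
def satIdeal {R : Type*} [CommRing R] (I : Ideal R) (g : R) : Ideal R where
  carrier := {f | ∃ m : ℕ, g ^ m * f ∈ I}
  zero_mem' := ⟨0, by simp⟩
  add_mem' := by
    rintro a b ⟨ma, ha⟩ ⟨mb, hb⟩
    refine ⟨ma + mb, ?_⟩
    have h : g ^ (ma + mb) * (a + b) = g ^ mb * (g ^ ma * a) + g ^ ma * (g ^ mb * b) := by
      ring
    rw [h]
    exact I.add_mem (I.mul_mem_left _ ha) (I.mul_mem_left _ hb)
  smul_mem' := by
    rintro c a ⟨m, hm⟩
    refine ⟨m, ?_⟩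
    have h : g ^ m * (c • a) = c * (g ^ m * a) := by
      simp only [smul_eq_mul]; ring
    rw [h]
    exact I.mul_mem_left _ hm


/-- The saturation `p_G` of `I_G` at `θ₀`. -/
def satPG {n : ℕ} (E : Fin n → Fin n → Prop) [DecidableRel E] :
    Ideal (MvPolynomial (Sym2 (Fin n)) ℂ) :=
  satIdeal (impIdeal E) (theta0 n)

/-!
`p_G` is the kernel of the parametrization `φ_G : X s(i,j) ↦ ((1 - Λ)⁻ᵀ Ω (1 - Λ)⁻¹)_ij` of the
Gaussian DAG model, `Λ = (λ_ij)` supported on the edges of `G` and `Ω = diag(ω_i)`, hence prime.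
Indeed `φ_G` kills `I_G`, because on the rows `< j` column `j` of the covariance matrix is a
combination of the columns in `pa(j)`, and `φ_G θ₀ ≠ 0` (specialize to `Λ = 0`, `Ω = 1`).
Conversely, once the principal minors are inverted a symmetric matrix factors as
`(1 - Λ)⁻ᵀ Ω (1 - Λ)⁻¹` with `Λ` the coefficients of the regression of each node on its
predecessors; modulo `I_G` the vanishing of `det M_{{t}∪pa(j),{j}∪pa(j)}` kills, via a Schur
complement, the coefficient of every non-edge `t → j`. So `R → (R ⧸ I_G)[1/θ₀]`, whose kernel is
`p_G`, factors through `φ_G`.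

For primes, agreeing on the invariant subring is equivalent to lying in one orbit of the finite
group acting (`Algebra.IsInvariant.exists_smul_of_under_eq`).
-/

section Minors

variable {n : ℕ} {R S : Type*} [CommRing R] [CommRing S]

theorem RingHom.map_fminor (f : R →+* S) (M : Matrix (Fin n) (Fin n) R) (A B : Finset (Fin n))
    (h : B.card = A.card) : f (fminor M A B h) = fminor (M.map f) A B h :=
  RingHom.map_det f _

theorem fminor_one (A : Finset (Fin n)) : fminor (1 : Matrix (Fin n) (Fin n) R) A A rfl = 1 :=
  (congrArg det (submatrix_one_embedding (A.orderEmbOfFin rfl).toEmbedding)).trans det_one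

theorem associated_fminor_det_submatrix {ι : Type*} [Fintype ι] [DecidableEq ι]
    (M : Matrix (Fin n) (Fin n) R) {A B : Finset (Fin n)} (h : B.card = A.card)
    (r c : ι → Fin n) (eA : ι ≃ A) (eB : ι ≃ B) (hr : ∀ x, (eA x : Fin n) = r x)
    (hc : ∀ x, (eB x : Fin n) = c x) :
    Associated (fminor M A B h) (M.submatrix r c).det := by
  let σ : Fin A.card ≃ ι := (A.orderIsoOfFin rfl).toEquiv.trans eA.symm
  let τ : Fin A.card ≃ ι := (B.orderIsoOfFin h).toEquiv.trans eB.symm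
  have hN : fminor M A B h =
      (((M.submatrix r c).submatrix id (σ.symm.trans τ)).submatrix σ σ).det := by
    unfold fminor
    congr 1
    ext k l
    simp [σ, τ, ← hr, ← hc, Finset.coe_orderIsoOfFin_apply]
  rw [hN, det_submatrix_equiv_self, det_permute']
  exact associated_unit_mul_left _ _ ((Equiv.Perm.sign _).isUnit.map (Int.castRingHom R))

theorem associated_fminor_self (M : Matrix (Fin n) (Fin n) R) (A : Finset (Fin n)) :
    Associated (fminor M A A rfl) (M.submatrix ((↑) : A → Fin n) (↑)).det :=
  associated_fminor_det_submatrix M rfl _ _ (Equiv.refl A) (Equiv.refl A) (fun _ => rfl)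
    (fun _ => rfl)

theorem associated_fminor_insert (M : Matrix (Fin n) (Fin n) R) {K : Finset (Fin n)}
    {t j : Fin n} (ht : t ∉ K) (hj : j ∉ K) (h : (insert j K).card = (insert t K).card) :
    Associated (fminor M (insert t K) (insert j K) h)
      (M.submatrix (Sum.elim ((↑) : K → Fin n) fun _ : Unit => t)
        (Sum.elim ((↑) : K → Fin n) fun _ : Unit => j)).det :=
  associated_fminor_det_submatrix M h _ _
    ((Equiv.optionEquivSumPUnit K).symm.trans (Finset.subtypeInsertEquivOption ht).symm)
    ((Equiv.optionEquivSumPUnit K).symm.trans (Finset.subtypeInsertEquivOption hj).symm)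
    (by rintro (_ | _) <;> rfl) (by rintro (_ | _) <;> rfl)

theorem fminor_eq_zero_of_col_eq_sum [IsDomain R] (M : Matrix (Fin n) (Fin n) R)
    {A K : Finset (Fin n)} {j : Fin n} (hj : j ∉ K) (c : Fin n → R)
    (hcol : ∀ r ∈ A, M r j = ∑ m ∈ K, M r m * c m) (h : (insert j K).card = A.card) :
    fminor M A (insert j K) h = 0 := by
  let w : Fin n → R := fun x => if x = j then -1 else c x
  let col := (insert j K).orderEmbOfFin h
  refine exists_mulVec_eq_zero_iff.mp ⟨fun l => w (col l), ?_, ?_⟩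
  · obtain ⟨l, hl⟩ : j ∈ Set.range col := by simp [col]
    exact Function.ne_iff.mpr ⟨l, by simp [w, hl]⟩
  · ext k
    have hr : A.orderEmbOfFin rfl k ∈ A := Finset.orderEmbOfFin_mem A rfl k
    have hsum : ∑ l, M (A.orderEmbOfFin rfl k) (col l) * w (col l)
        = ∑ x ∈ insert j K, M (A.orderEmbOfFin rfl k) x * w x := by
      rw [← Finset.sum_coe_sort (insert j K)]
      refine Fintype.sum_equiv ((insert j K).orderIsoOfFin h).toEquiv _ _ fun l => ?_
      simp [col, Finset.coe_orderIsoOfFin_apply]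
    have hK : ∑ m ∈ K, M (A.orderEmbOfFin rfl k) m * w m
        = ∑ m ∈ K, M (A.orderEmbOfFin rfl k) m * c m :=
      Finset.sum_congr rfl fun m hm => by simp [w, ne_of_mem_of_not_mem hm hj]
    simp only [mulVec, dotProduct, of_apply, Pi.zero_apply]
    rw [hsum, Finset.sum_insert hj, hK, ← hcol _ hr]
    simp [w]

end Minors

section StructuralEquationModel

variable {ι A B : Type*} [DecidableEq ι] [CommRing A] [CommRing B]

theorem isUpperTriangular_one_sub [LinearOrder ι] {Λ : Matrix ι ι A}
    (hΛ : ∀ i j, j ≤ i → Λ i j = 0) : (1 - Λ).IsUpperTriangular :=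
  fun i j hji => by simp [one_apply_ne (show j < i from hji).ne', hΛ i j hji.le]

variable [Fintype ι]

/-- The covariance matrix of the linear structural equation model with edge weights `Λ` and
error variances `ω`. -/
def semCov (Λ : Matrix ι ι A) (ω : ι → A) : Matrix ι ι A :=
  ((1 - Λ)⁻¹)ᵀ * diagonal ω * (1 - Λ)⁻¹

theorem semCov_transpose (Λ : Matrix ι ι A) (ω : ι → A) : (semCov Λ ω)ᵀ = semCov Λ ω := by
  simp only [semCov, transpose_mul, transpose_transpose, diagonal_transpose, Matrix.mul_assoc]

variable [LinearOrder ι] {Λ : Matrix ι ι A}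

theorem isUnit_det_one_sub (hΛ : ∀ i j, j ≤ i → Λ i j = 0) : IsUnit (1 - Λ).det := by
  rw [det_of_isUpperTriangular (isUpperTriangular_one_sub hΛ),
    Finset.prod_eq_one fun i _ => by simp [hΛ i i le_rfl]]
  exact isUnit_one

theorem map_semCov (f : A →+* B) (hΛ : ∀ i j, j ≤ i → Λ i j = 0) (ω : ι → A) :
    (semCov Λ ω).map f = semCov (Λ.map f) (f ∘ ω) := by
  have hinv : ((1 - Λ)⁻¹).map f = (1 - Λ.map f)⁻¹ := by
    refine (inv_eq_left_inv ?_).symm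
    rw [← f.mapMatrix_apply, ← f.mapMatrix_apply, ← map_one f.mapMatrix, ← map_sub, ← map_mul,
      nonsing_inv_mul _ (isUnit_det_one_sub hΛ), map_one]
  simp only [semCov, ← f.mapMatrix_apply, map_mul]
  simp only [f.mapMatrix_apply, transpose_map, hinv, diagonal_map (map_zero f)]
  rfl

theorem isLowerTriangular_semCov_mul_one_sub (hΛ : ∀ i j, j ≤ i → Λ i j = 0) (ω : ι → A) :
    (semCov Λ ω * (1 - Λ)).IsLowerTriangular := by
  have : Invertible (1 - Λ) := invertibleOfIsUnitDet _ (isUnit_det_one_sub hΛ)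
  have hW : ((1 - Λ)⁻¹).IsUpperTriangular :=
    blockTriangular_inv_of_blockTriangular (isUpperTriangular_one_sub hΛ)
  rw [semCov, Matrix.mul_assoc, nonsing_inv_mul _ (isUnit_det_one_sub hΛ),
    Matrix.mul_one]
  exact hW.transpose.mul (blockTriangular_diagonal ω)

theorem semCov_apply_eq_sum (hΛ : ∀ i j, j ≤ i → Λ i j = 0) (ω : ι → A) {k j : ι} (hkj : k < j) :
    semCov Λ ω k j = ∑ m, semCov Λ ω k m * Λ m j := by
  have h := isLowerTriangular_semCov_mul_one_sub hΛ ω (show OrderDual.toDual j < _ from hkj)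
  rwa [Matrix.mul_sub, Matrix.mul_one, Matrix.sub_apply, sub_eq_zero] at h

theorem eq_semCov_of_isLowerTriangular {S : Matrix ι ι A} (hS : Sᵀ = S)
    (hΛ : ∀ i j, j ≤ i → Λ i j = 0) (hlow : (S * (1 - Λ)).IsLowerTriangular) :
    S = semCov Λ ((1 - Λ)ᵀ * S * (1 - Λ)).diag := by
  set U := 1 - Λ
  set D := Uᵀ * S * U
  have hD_low : D.IsLowerTriangular := by
    rw [show D = Uᵀ * (S * U) from Matrix.mul_assoc _ _ _]
    exact (isUpperTriangular_one_sub hΛ).transpose.mul hlow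
  have hD_symm : Dᵀ = D := by
    simp only [D, transpose_mul, transpose_transpose, hS, Matrix.mul_assoc]
  have hD : D.IsDiag := fun i j hij => by
    rcases hij.lt_or_gt with h | h
    · exact hD_low h
    · rw [← hD_symm]; exact hD_low h
  have hU : U * U⁻¹ = 1 := mul_nonsing_inv _ (isUnit_det_one_sub hΛ)
  rw [semCov, hD.diagonal_diag]
  simp only [D, ← Matrix.mul_assoc, ← transpose_mul]
  rw [hU, transpose_one, Matrix.one_mul, Matrix.mul_assoc, hU, Matrix.mul_one]

end StructuralEquationModel

section Regression

open Finset

/-- Schur complement formula for the bordered matrix `S_{K ∪ {t}, K ∪ {j}}`. -/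
theorem det_bordered_submatrix {ι A : Type*} [DecidableEq ι] [CommRing A]
    {S : Matrix ι ι A} {K : Finset ι}
    (hSK : IsUnit (S.submatrix ((↑) : K → ι) (↑)).det) (t j : ι) :
    (S.submatrix (Sum.elim (↑) fun _ : Unit => t)
      (Sum.elim ((↑) : K → ι) fun _ : Unit => j)).det =
      (S.submatrix ((↑) : K → ι) (↑)).det *
        (S t j - ∑ k : K, S t k * ((S.submatrix (↑) (↑))⁻¹ *ᵥ fun k : K => S k j) k) := by
  set N : Matrix K K A := S.submatrix (↑) (↑)
  have : Invertible N := invertibleOfIsUnitDet N hSK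
  have hblocks : S.submatrix (Sum.elim (↑) fun _ : Unit => t)
      (Sum.elim ((↑) : K → ι) fun _ : Unit => j) =
        fromBlocks N (of fun (k : K) (_ : Unit) => S k j) (of fun (_ : Unit) (k : K) => S t k)
          (of fun _ _ => S t j) := by
    ext (_ | _) (_ | _) <;> rfl
  rw [hblocks, det_fromBlocks₁₁, invOf_eq_nonsing_inv, det_unique (n := Unit)]
  simp only [Matrix.sub_apply, mul_apply, of_apply, mulVec, dotProduct, Finset.mul_sum,
    Finset.sum_mul, mul_assoc]
  rw [Finset.sum_comm]

theorem Finset.sum_mul_eq_sum_subtype {ι A : Type*} [Fintype ι] [CommRing A] (s : Finset ι)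
    (f x : ι → A) (hx : ∀ m ∉ s, x m = 0) : ∑ m, f m * x m = ∑ m : s, f m * x m := by
  rw [sum_coe_sort s (fun m => f m * x m)]
  exact (sum_subset (subset_univ s) fun m _ hm => by rw [hx m hm, mul_zero]).symm

variable {ι A : Type*} [DecidableEq ι] [LinearOrder ι] [LocallyFiniteOrderBot ι] [CommRing A]

/-- Column `j` holds the coefficients of the regression of `j` on its predecessors. -/
def regCoeff (S : Matrix ι ι A) : Matrix ι ι A := of fun i j =>
  if h : i < j then
    ((S.submatrix (↑) (↑) : Matrix (Iio j) (Iio j) A)⁻¹ *ᵥ fun m => S m j) ⟨i, mem_Iio.2 h⟩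
  else 0

variable {S : Matrix ι ι A}

theorem regCoeff_of_not_lt {i j : ι} (h : ¬ i < j) : regCoeff S i j = 0 := dif_neg h

variable [Fintype ι]

theorem sum_mul_regCoeff {j : ι} (hS : IsUnit (S.submatrix ((↑) : Iio j → ι) (↑)).det) {i : ι}
    (hi : i < j) : ∑ m, S i m * regCoeff S m j = S i j := by
  set N : Matrix (Iio j) (Iio j) A := S.submatrix (↑) (↑)
  set b : Iio j → A := fun m => S m j
  have hreg : ∀ m : Iio j, regCoeff S m j = (N⁻¹ *ᵥ b) m := fun m => dif_pos (mem_Iio.1 m.2)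
  rw [sum_mul_eq_sum_subtype (Iio j) _ _ fun m hm => regCoeff_of_not_lt (by simpa using hm)]
  calc ∑ m : Iio j, S i m * regCoeff S m j = (N *ᵥ (N⁻¹ *ᵥ b)) ⟨i, mem_Iio.2 hi⟩ := by
        simp only [hreg]; rfl
    _ = S i j := by rw [mulVec_mulVec, mul_nonsing_inv N hS, one_mulVec]

theorem regCoeff_eq_of_sum_mul_eq {j : ι}
    (hS : IsUnit (S.submatrix ((↑) : Iio j → ι) (↑)).det) (x : ι → A)
    (hx : ∀ m, ¬ m < j → x m = 0) (hsol : ∀ r < j, ∑ m, S r m * x m = S r j) {i : ι}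
    (hi : i < j) : regCoeff S i j = x i := by
  set N : Matrix (Iio j) (Iio j) A := S.submatrix (↑) (↑)
  have hN : N *ᵥ (fun m => x m) = fun m : Iio j => S m j := by
    ext r
    rw [← hsol r (mem_Iio.1 r.2),
      sum_mul_eq_sum_subtype (Iio j) _ _ fun m hm => hx m (by simpa using hm)]
    rfl
  have : regCoeff S i j = (N⁻¹ *ᵥ fun m : Iio j => S m j) ⟨i, mem_Iio.2 hi⟩ := dif_pos hi
  rw [this, ← hN, mulVec_mulVec, nonsing_inv_mul N hS, one_mulVec]

theorem isLowerTriangular_mul_one_sub_regCoeff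
    (hS : ∀ j : ι, IsUnit (S.submatrix ((↑) : Iio j → ι) (↑)).det) :
    (S * (1 - regCoeff S)).IsLowerTriangular := fun i j (hij : i < j) => by
  rw [Matrix.mul_sub, Matrix.mul_one, Matrix.sub_apply, mul_apply, sum_mul_regCoeff (hS j) hij,
    sub_self]

theorem regCoeff_eq_zero_of_det_bordered_eq_zero {j : ι} {K : Finset ι} (hK : K ⊆ Iio j)
    (hS : IsUnit (S.submatrix ((↑) : Iio j → ι) (↑)).det)
    (hSK : IsUnit (S.submatrix ((↑) : K → ι) (↑)).det)
    (hborder : ∀ t < j, t ∉ K →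
      (S.submatrix (Sum.elim (↑) fun _ : Unit => t) (Sum.elim ((↑) : K → ι) fun _ : Unit => j)).det
        = 0)
    {t : ι} (ht : t < j) (htK : t ∉ K) : regCoeff S t j = 0 := by
  set N : Matrix K K A := S.submatrix (↑) (↑)
  set a : K → A := N⁻¹ *ᵥ fun k : K => S k j
  -- the regression of `j` on `K` alone, extended by zero, already solves the normal equations
  let x : ι → A := fun m => if h : m ∈ K then a ⟨m, h⟩ else 0
  have hx : ∀ m ∉ K, x m = 0 := fun m hm => dif_neg hm
  have hxK : ∀ k : K, x k = a k := fun k => dif_pos k.2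
  have hsol : ∀ r < j, ∑ m, S r m * x m = S r j := by
    intro r hr
    rw [sum_mul_eq_sum_subtype K _ _ hx]
    simp only [hxK]
    by_cases hrK : r ∈ K
    · have hNa : N *ᵥ a = fun k : K => S k j := by
        rw [mulVec_mulVec, mul_nonsing_inv N hSK, one_mulVec]
      exact congrFun hNa ⟨r, hrK⟩
    · have h := hborder r hr hrK
      rw [det_bordered_submatrix hSK, hSK.mul_right_eq_zero, sub_eq_zero] at h
      exact h.symm
  rw [regCoeff_eq_of_sum_mul_eq hS x (fun m hm => hx m fun h => hm (mem_Iio.1 (hK h))) hsol ht]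
  exact hx t htK

end Regression

section Saturation

variable {R : Type*} [CommRing R] (I : Ideal R) (g : R)

abbrev SatRing := Localization.Away (Ideal.Quotient.mk I g)

def toSatRing : R →+* SatRing I g := (algebraMap _ _).comp (Ideal.Quotient.mk I)

theorem ker_toSatRing : RingHom.ker (toSatRing I g) = satIdeal I g := by
  ext f
  rw [RingHom.mem_ker, toSatRing, RingHom.comp_apply,
    IsLocalization.map_eq_zero_iff (Submonoid.powers (Ideal.Quotient.mk I g))]
  constructor
  · rintro ⟨⟨_, m, rfl⟩, hm⟩
    exact ⟨m, Ideal.Quotient.eq_zero_iff_mem.1 (by rwa [map_mul, map_pow])⟩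
  · rintro ⟨m, hm⟩
    refine ⟨⟨_, m, rfl⟩, ?_⟩
    change Ideal.Quotient.mk I g ^ m * Ideal.Quotient.mk I f = 0
    rw [← map_pow, ← map_mul]
    exact Ideal.Quotient.eq_zero_iff_mem.2 hm

theorem isUnit_toSatRing_of_dvd {f : R} (hf : f ∣ g) : IsUnit (toSatRing I g f) :=
  isUnit_of_dvd_unit (map_dvd _ hf)
    (IsLocalization.Away.algebraMap_isUnit (Ideal.Quotient.mk I g))

end Saturation

section GaussianDAG

open Finset

variable {n : ℕ} (E : Fin n → Fin n → Prop) [DecidableRel E]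

/-- Polynomials in the edge weights `λ_ij = X (inl (i, j))` and error variances
`ω_i = X (inr i)`. -/
abbrev ParamRing (n : ℕ) := MvPolynomial ((Fin n × Fin n) ⊕ Fin n) ℂ

def edgeWeights : Matrix (Fin n) (Fin n) (ParamRing n) :=
  of fun i j => if E i j then X (Sum.inl (i, j)) else 0

def errVars : Fin n → ParamRing n := fun i => X (Sum.inr i)

def dagParam : MvPolynomial (Sym2 (Fin n)) ℂ →ₐ[ℂ] ParamRing n :=
  aeval <| Sym2.lift ⟨fun i j => semCov (edgeWeights E) errVars i j,
    fun i j => congrFun₂ (semCov_transpose (edgeWeights E) errVars) j i⟩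

theorem dagParam_X (i j : Fin n) :
    dagParam E (X s(i, j)) = semCov (edgeWeights E) errVars i j := by
  simp [dagParam]

theorem map_genMat_dagParam :
    (genMat n).map (dagParam E) = semCov (edgeWeights E) errVars :=
  Matrix.ext fun i j => dagParam_X E i j

variable {E}

theorem edgeWeights_of_le (hE : ∀ i j, E i j → i < j) (i j : Fin n) (hji : j ≤ i) :
    edgeWeights E i j = 0 :=
  if_neg fun h => (hE i j h).not_ge hji

theorem impIdeal_le_ker_dagParam (hE : ∀ i j, E i j → i < j) :
    impIdeal E ≤ RingHom.ker (dagParam E) := by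
  rw [impIdeal, Ideal.span_le]
  rintro f ⟨i, j, hij, -, h, rfl⟩
  have hpa : ∀ m ∈ parents E j, m < j := fun m hm => hE m j (mem_filter.1 hm).2
  rw [SetLike.mem_coe, RingHom.mem_ker, ← AlgHom.coe_toRingHom, RingHom.map_fminor,
    AlgHom.coe_toRingHom, map_genMat_dagParam]
  refine fminor_eq_zero_of_col_eq_sum _ (fun hj => (hpa j hj).false) (fun m => X (Sum.inl (m, j)))
    (fun r hr => ?_) h
  have hrj : r < j := by
    rcases mem_insert.1 hr with rfl | hr
    exacts [hij, hpa r hr]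
  rw [semCov_apply_eq_sum (edgeWeights_of_le hE) _ hrj, parents, sum_filter]
  exact sum_congr rfl fun m _ => by simp [edgeWeights, mul_ite]

theorem map_theta0_eq_one {A : Type*} [CommRing A] (f : MvPolynomial (Sym2 (Fin n)) ℂ →+* A)
    (hf : (genMat n).map f = 1) : f (theta0 n) = 1 := by
  rw [theta0, map_prod]
  exact prod_eq_one fun A _ => by rw [f.map_fminor, hf, fminor_one]

theorem dagParam_theta0_ne_zero (hE : ∀ i j, E i j → i < j) : dagParam E (theta0 n) ≠ 0 := by
  let ev : ParamRing n →+* ℂ := eval (Sum.elim 0 1)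
  have hΛ : (edgeWeights E).map ev = 0 := by
    ext i j
    by_cases h : E i j <;> simp [edgeWeights, h, ev]
  have hω : ev ∘ errVars = 1 := by
    ext i
    simp [errVars, ev]
  have hone : (genMat n).map (ev.comp (dagParam E)) = 1 := by
    rw [RingHom.coe_comp, ← Matrix.map_map, RingHom.coe_coe, map_genMat_dagParam,
      map_semCov ev (edgeWeights_of_le hE), hΛ, hω]
    simp [semCov]
  intro h
  simpa [h] using map_theta0_eq_one _ hone

end GaussianDAG

section Primality

open Finset

variable {n : ℕ} (E : Fin n → Fin n → Prop) [DecidableRel E]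

def satGenMat : Matrix (Fin n) (Fin n) (SatRing (impIdeal E) (theta0 n)) :=
  (genMat n).map (toSatRing (impIdeal E) (theta0 n))

theorem satGenMat_transpose : (satGenMat E)ᵀ = satGenMat E := by
  ext i j
  simp [satGenMat, genMat, Sym2.eq_swap]

theorem isUnit_det_satGenMat_submatrix (A : Finset (Fin n)) :
    IsUnit ((satGenMat E).submatrix ((↑) : A → Fin n) (↑)).det := by
  refine (associated_fminor_self _ A).isUnit ?_
  rw [satGenMat, ← RingHom.map_fminor]
  exact isUnit_toSatRing_of_dvd _ _ (dvd_prod_of_mem _ (mem_univ A))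

variable {E}

theorem det_bordered_satGenMat_eq_zero (hE : ∀ i j, E i j → i < j) {t j : Fin n} (ht : t < j)
    (htK : t ∉ parents E j) :
    ((satGenMat E).submatrix (Sum.elim ((↑) : parents E j → Fin n) fun _ : Unit => t)
      (Sum.elim ((↑) : parents E j → Fin n) fun _ : Unit => j)).det = 0 := by
  have hj : j ∉ parents E j := fun h => (hE j j (mem_filter.1 h).2).false
  have htE : ¬ E t j := fun h => htK (mem_filter.2 ⟨mem_univ t, h⟩)
  have hcard : (insert j (parents E j)).card = (insert t (parents E j)).card := by
    rw [card_insert_of_notMem hj, card_insert_of_notMem htK]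
  have hgen : fminor (genMat n) (insert t (parents E j)) (insert j (parents E j)) hcard ∈
      impIdeal E := Ideal.subset_span ⟨t, j, ht, htE, hcard, rfl⟩
  refine (associated_fminor_insert _ htK hj hcard).eq_zero_iff.1 ?_
  rw [satGenMat, ← RingHom.map_fminor, ← RingHom.mem_ker, ker_toSatRing]
  exact ⟨0, by simpa using hgen⟩

theorem regCoeff_satGenMat_of_not_edge (hE : ∀ i j, E i j → i < j) {i j : Fin n}
    (h : ¬ E i j) : regCoeff (satGenMat E) i j = 0 := by
  by_cases hij : i < j
  · refine regCoeff_eq_zero_of_det_bordered_eq_zero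
      (fun m hm => mem_Iio.2 (hE m j (mem_filter.1 hm).2)) (isUnit_det_satGenMat_submatrix E _)
      (isUnit_det_satGenMat_submatrix E _)
      (fun t ht htK => det_bordered_satGenMat_eq_zero hE ht htK) hij fun hi => h (mem_filter.1 hi).2
  · exact regCoeff_of_not_lt hij

/-- Over `(R ⧸ I_G)[1/θ₀]` the generic matrix is `semCov Λ ω` for its regression coefficients
`Λ`, which vanish off the edges of `G`. -/
theorem exists_comp_dagParam_eq_toSatRing (hE : ∀ i j, E i j → i < j) :
    ∃ ψ : ParamRing n →+* SatRing (impIdeal E) (theta0 n),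
      ψ.comp (dagParam E) = toSatRing (impIdeal E) (theta0 n) := by
  set S := satGenMat E
  set Λ := regCoeff S
  set ω := ((1 - Λ)ᵀ * S * (1 - Λ)).diag
  let ψ : ParamRing n →+* SatRing (impIdeal E) (theta0 n) :=
    eval₂Hom ((toSatRing _ _).comp C) (Sum.elim (fun p => Λ p.1 p.2) ω)
  have hΛ : (edgeWeights E).map ψ = Λ := by
    ext i j
    by_cases h : E i j
    · simp [edgeWeights, h, ψ]
    · simpa [edgeWeights, h] using (regCoeff_satGenMat_of_not_edge hE h).symm
  have hω : ψ ∘ errVars = ω := funext fun i => by simp [errVars, ψ]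
  have hS : S = semCov Λ ω :=
    eq_semCov_of_isLowerTriangular (satGenMat_transpose E)
      (fun i j h => regCoeff_of_not_lt h.not_gt)
      (isLowerTriangular_mul_one_sub_regCoeff fun j => isUnit_det_satGenMat_submatrix E _)
  refine ⟨ψ, MvPolynomial.ringHom_ext (fun c => by simp [ψ]) fun v => ?_⟩
  induction v using Sym2.ind with
  | _ i j =>
    have h := congrFun₂ (map_semCov ψ (edgeWeights_of_le hE) errVars) i j
    rw [map_apply, hΛ, hω, ← hS] at h
    show ψ (dagParam E (X s(i, j))) = _
    rw [dagParam_X]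
    exact h

theorem satPG_eq_ker_dagParam (hE : ∀ i j, E i j → i < j) :
    satPG E = RingHom.ker (dagParam E) := by
  refine le_antisymm (fun f hf => ?_) fun f hf => ?_
  · obtain ⟨m, hm⟩ := hf
    have h := impIdeal_le_ker_dagParam hE hm
    rw [RingHom.mem_ker, map_mul, map_pow] at h
    exact (mul_eq_zero.1 h).resolve_left (pow_ne_zero _ (dagParam_theta0_ne_zero hE))
  · obtain ⟨ψ, hψ⟩ := exists_comp_dagParam_eq_toSatRing hE
    change f ∈ satIdeal (impIdeal E) (theta0 n)
    rw [← ker_toSatRing, ← hψ, RingHom.mem_ker, RingHom.comp_apply]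
    rw [RingHom.mem_ker] at hf
    rw [RingHom.coe_coe, hf, map_zero]

theorem isPrime_satPG (hE : ∀ i j, E i j → i < j) : (satPG E).IsPrime :=
  satPG_eq_ker_dagParam hE ▸ RingHom.ker_isPrime _

end Primality

open scoped Pointwise

section Orbit

variable {G B : Type*} [Group G] [CommRing B] [MulSemiringAction G B]

theorem Ideal.exists_smul_eq_iff_forall_fixed_mem_iff [Finite G] (P Q : Ideal B) [P.IsPrime]
    [Q.IsPrime] :
    (∃ g : G, g • P = Q) ↔ ∀ b : B, (∀ g : G, g • b = b) → (b ∈ P ↔ b ∈ Q) := by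
  constructor
  · rintro ⟨g, rfl⟩ b hb
    rw [Ideal.mem_pointwise_smul_iff_inv_smul_mem, hb]
  · intro h
    let A := FixedPoints.subring B G
    have : SMulCommClass G A B :=
      ⟨fun g a b => by
        rw [Subring.smul_def, Subring.smul_def, smul_eq_mul, smul_eq_mul, smul_mul', a.2 g]⟩
    have : Algebra.IsInvariant A B G := ⟨fun b hb => ⟨⟨b, hb⟩, rfl⟩⟩
    obtain ⟨g, hg⟩ := Algebra.IsInvariant.exists_smul_of_under_eq A B G P Q <|
      Ideal.ext fun a => h a a.2
    exact ⟨g, hg.symm⟩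

end Orbit

section PermAction

variable {α R : Type*} [CommSemiring R]

instance MvPolynomial.sym2PermAction :
    MulSemiringAction (Equiv.Perm α) (MvPolynomial (Sym2 α) R) where
  smul s f := rename (Sym2.map s) f
  one_smul f := by
    change rename (Sym2.map _root_.id) f = f
    rw [Sym2.map_id, rename_id_apply]
  mul_smul s t f := by
    change rename (Sym2.map (s ∘ t)) f = rename (Sym2.map s) (rename (Sym2.map t) f)
    rw [rename_rename, Sym2.map_comp]
  smul_zero s := map_zero _
  smul_add s := map_add _
  smul_one s := map_one _
  smul_mul s := map_mul _

end PermAction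

theorem exists_perm_map_satPG_iff_invariant_general {n : ℕ}
    (E : Fin n → Fin n → Prop) [DecidableRel E] (hE : ∀ i j, E i j → i < j)
    (E' : Fin n → Fin n → Prop) [DecidableRel E'] (hE' : ∀ i j, E' i j → i < j) :
    (∃ s : Equiv.Perm (Fin n),
        Ideal.map (MvPolynomial.rename (Sym2.map ⇑s)).toRingHom (satPG E) = satPG E') ↔
      ∀ f : MvPolynomial (Sym2 (Fin n)) ℂ,
        (∀ s : Equiv.Perm (Fin n), MvPolynomial.rename (Sym2.map ⇑s) f = f) →
        (f ∈ satPG E ↔ f ∈ satPG E') := by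
  have := isPrime_satPG hE
  have := isPrime_satPG hE'
  -- `s • I` and `s • f` unfold to the renamings in the statement
  exact Ideal.exists_smul_eq_iff_forall_fixed_mem_iff (satPG E) (satPG E')

/-- Theorem 4 of the paper (algebraic isomorphism criterion): there is a permutation of the
nodes carrying `p_G` onto `p_{G'}` if and only if `p_G` and `p_{G'}` have the same intersection
with the subring of permutation-invariant polynomials. -/
theorem exists_perm_map_satPG_iff_invariant {n : ℕ} (hn : 1 ≤ n)
    (E : Fin n → Fin n → Prop) [DecidableRel E] (hE : ∀ i j, E i j → i < j)
    (E' : Fin n → Fin n → Prop) [DecidableRel E'] (hE' : ∀ i j, E' i j → i < j) :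
    (∃ s : Equiv.Perm (Fin n),
        Ideal.map (MvPolynomial.rename (Sym2.map ⇑s)).toRingHom (satPG E) = satPG E') ↔
      ∀ f : MvPolynomial (Sym2 (Fin n)) ℂ,
        (∀ s : Equiv.Perm (Fin n), MvPolynomial.rename (Sym2.map ⇑s) f = f) →
        (f ∈ satPG E ↔ f ∈ satPG E') :=
  exists_perm_map_satPG_iff_invariant_general E hE E' hE'
end
end
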